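/- arXiv:2508.01551 — 4 statements merged into one kernel-verified Lean document; each statement's English description precedes it below -/
import Mathlib

section
/- The linear map f: (3)⊗(n) → (2)⊗(n+1), obtained by composing the inclusion (3) ⊂ (2)⊗(1) with the map id⊗m where m: (1)⊗(n) → (n+1) is polynomial multiplication, is surjective whenever n ≥ 2. -/
/-
STATEMENT 0: Realize the irreducible SU(2)-representation (m) as the space of
homogeneous polynomials of degree m in x, y, identified with its coefficient
vector in ℂ^{m+1} (index i ↔ coefficient of xⁱy^{m−i}).  The representation
(3) embeds in (2)⊗(1) as the span of
  y²⊗y, 2xy⊗y + y²⊗x, 2xy⊗x + x²⊗y, x²⊗x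
(basis of (2): x², xy, y²; basis of (1): x, y), and the multiplication map
(1)⊗(n) → (n+1) sends p⊗q to pq.  The resulting linear map
f : (3)⊗(n) → (2)⊗(n+1) (inclusion followed by id⊗multiplication) is
surjective whenever n ≥ 2.  Below, (3)⊗(n) is identified with Fin 4 → ℂ^{n+1}
via the above basis of (3), and (2)⊗(n+1) with Fin 3 → ℂ^{n+2} via the basis
x², xy, y² of (2); the map f is manifestly linear in these coordinates.
-/

noncomputable section

abbrev Coef (n : ℕ) := Fin (n+1) → ℂ

/-- Multiplication by x on homogeneous polynomials, in coefficient coordinates. -/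
def mulX (n : ℕ) (c : Coef n) : Coef (n+1) := fun j =>
  if h : (j:ℕ) = 0 then 0 else c ⟨(j:ℕ) - 1, by have := j.isLt; omega⟩

/-- Multiplication by y on homogeneous polynomials, in coefficient coordinates. -/
def mulY (n : ℕ) (c : Coef n) : Coef (n+1) := fun j =>
  if h : (j:ℕ) < n + 1 then c ⟨(j:ℕ), h⟩ else 0

/-- The map (3)⊗(n) → (2)⊗(n+1): inclusion (3) ⊂ (2)⊗(1) followed by
multiplying the (1)-factor into the (n)-factor. -/
def fmap (n : ℕ) (v : Fin 4 → Coef n) : Fin 3 → Coef (n+1) :=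
  ![mulY n (v 2) + mulX n (v 3),
    (2:ℂ) • mulY n (v 1) + (2:ℂ) • mulX n (v 2),
    mulY n (v 0) + mulX n (v 1)]

theorem stmt0 (n : ℕ) (hn : 2 ≤ n) : Function.Surjective (fmap n) := by
  intro w
  set v3 : Coef n := fun i =>
    if (i:ℕ) = n then w 0 ⟨n+1, by omega⟩
    else if (i:ℕ) = n-1 then w 0 ⟨n, by omega⟩ - w 1 ⟨n+1, by omega⟩ / 2
    else if (i:ℕ) = n-2 then
      w 2 ⟨n+1, by omega⟩ - w 1 ⟨n, by omega⟩ / 2 + w 0 ⟨n-1, by omega⟩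
    else 0 with hv3
  set v2 : Coef n := fun j =>
    w 0 ⟨(j:ℕ), by omega⟩ -
      (if h : (j:ℕ) = 0 then 0 else v3 ⟨(j:ℕ)-1, by have := j.isLt; omega⟩) with hv2
  set v1 : Coef n := fun j =>
    w 1 ⟨(j:ℕ), by omega⟩ / 2 -
      (if h : (j:ℕ) = 0 then 0 else v2 ⟨(j:ℕ)-1, by have := j.isLt; omega⟩) with hv1
  set v0 : Coef n := fun j =>
    w 2 ⟨(j:ℕ), by omega⟩ -
      (if h : (j:ℕ) = 0 then 0 else v1 ⟨(j:ℕ)-1, by have := j.isLt; omega⟩) with hv0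
  refine ⟨![v0, v1, v2, v3], ?_⟩
  have hv2n : v2 ⟨n, by omega⟩ = w 1 ⟨n+1, by omega⟩ / 2 := by
    simp only [hv2, hv3]
    split_ifs <;> first | (exfalso; omega) | ring1
  have hv1n : v1 ⟨n, by omega⟩ = w 2 ⟨n+1, by omega⟩ := by
    simp only [hv1, hv2, hv3]
    split_ifs <;> first | (exfalso; omega) | ring1
  funext i j
  fin_cases i
  · show (mulY n v2 + mulX n v3) j = w 0 j
    simp only [Pi.add_apply, mulX, mulY]
    by_cases hj : (j:ℕ) < n + 1
    · rw [dif_pos hj]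
      simp only [hv2, Fin.eta]
      split_ifs <;> ring1
    · rw [dif_neg hj, dif_neg (by have := j.isLt; omega : ¬(j:ℕ) = 0)]
      have hjn : (j:ℕ) = n+1 := by have := j.isLt; omega
      have h1 : (⟨(j:ℕ)-1, by have := j.isLt; omega⟩ : Fin (n+1)) = ⟨n, by omega⟩ := by
        ext; simp [hjn]
      have h2 : (⟨n+1, by omega⟩ : Fin (n+2)) = j := by ext; simp [hjn]
      rw [h1]
      simp only [hv3]
      rw [if_pos trivial, h2]; ring1
  · show ((2:ℂ) • mulY n v1 + (2:ℂ) • mulX n v2) j = w 1 j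
    simp only [Pi.add_apply, Pi.smul_apply, mulX, mulY, smul_eq_mul]
    by_cases hj : (j:ℕ) < n + 1
    · rw [dif_pos hj]
      simp only [hv1, Fin.eta]
      split_ifs <;> ring1
    · rw [dif_neg hj, dif_neg (by have := j.isLt; omega : ¬(j:ℕ) = 0)]
      have hjn : (j:ℕ) = n+1 := by have := j.isLt; omega
      have h1 : (⟨(j:ℕ)-1, by have := j.isLt; omega⟩ : Fin (n+1)) = ⟨n, by omega⟩ := by
        ext; simp [hjn]
      have h2 : (⟨n+1, by omega⟩ : Fin (n+2)) = j := by ext; simp [hjn]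
      rw [h1, hv2n, h2]; ring1
  · show (mulY n v0 + mulX n v1) j = w 2 j
    simp only [Pi.add_apply, mulX, mulY]
    by_cases hj : (j:ℕ) < n + 1
    · rw [dif_pos hj]
      simp only [hv0, Fin.eta]
      split_ifs <;> ring1
    · rw [dif_neg hj, dif_neg (by have := j.isLt; omega : ¬(j:ℕ) = 0)]
      have hjn : (j:ℕ) = n+1 := by have := j.isLt; omega
      have h1 : (⟨(j:ℕ)-1, by have := j.isLt; omega⟩ : Fin (n+1)) = ⟨n, by omega⟩ := by
        ext; simp [hjn]
      have h2 : (⟨n+1, by omega⟩ : Fin (n+2)) = j := by ext; simp [hjn]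
      rw [h1, hv1n, h2]; ring1
end
end

section
/- The composition f: (3)⊗(n) → (2)⊗(1)⊗(n) → (2)⊗(n+1) has image containing all pure tensors x²⊗q, xy⊗q and y²⊗q for every monomial q of degree n+1, provided n ≥ 2. -/
/-
STATEMENT 1: With the same realization as in Statement 0 (homogeneous
polynomials in x, y identified with coefficient vectors; (3) ⊂ (2)⊗(1) spanned
by y²⊗y, 2xy⊗y + y²⊗x, 2xy⊗x + x²⊗y, x²⊗x; the second map multiplies the
(1)-factor into the (n)-factor), the image of the composition
f : (3)⊗(n) → (2)⊗(1)⊗(n) → (2)⊗(n+1) contains all pure tensors x²⊗q, xy⊗q,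
y²⊗q for every monomial q of degree n+1, provided n ≥ 2.  A pure tensor
(basis of (2))⊗(monomial) is the vector Pi.single i (Pi.single k 1).
-/

noncomputable section

/-- Standard basis vector with index given as a natural number. -/
def e (n m : ℕ) : Coef n := fun j => if (j:ℕ) = m then 1 else 0

lemma mulX_e (n m : ℕ) : mulX n (e n m) = e (n+1) (m+1) := by
  funext j
  simp only [mulX, e]
  split_ifs <;> first | rfl | omega

lemma mulY_e (n m : ℕ) (h : m ≤ n) : mulY n (e n m) = e (n+1) m := by
  funext j
  simp only [mulY, e]
  split_ifs <;> first | rfl | omega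

lemma mulX_smul (n : ℕ) (a : ℂ) (c : Coef n) : mulX n (a • c) = a • mulX n c := by
  funext j
  simp only [mulX, Pi.smul_apply, smul_eq_mul]
  split_ifs <;> simp

lemma mulY_smul (n : ℕ) (a : ℂ) (c : Coef n) : mulY n (a • c) = a • mulY n c := by
  funext j
  simp only [mulY, Pi.smul_apply, smul_eq_mul]
  split_ifs <;> simp

lemma mulX_zero (n : ℕ) : mulX n (0 : Coef n) = 0 := by
  funext j; simp only [mulX, Pi.zero_apply]; split_ifs <;> rfl

lemma mulY_zero (n : ℕ) : mulY n (0 : Coef n) = 0 := by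
  funext j; simp only [mulY, Pi.zero_apply]; split_ifs <;> rfl

lemma single_eq_e (n : ℕ) (k : Fin (n+2)) :
    Pi.single k (1:ℂ) = e (n+1) (k:ℕ) := by
  funext j
  simp [Pi.single_apply, e, Fin.ext_iff]

lemma eq_single3 {α : Type*} [Zero α] (f : Fin 3 → α) (i : Fin 3) (T : α)
    (h : f i = T) (h2 : ∀ r, r ≠ i → f r = 0) : f = Pi.single i T := by
  funext r
  rcases eq_or_ne r i with rfl | hr
  · simp [h]
  · simp [Pi.single_apply, hr, h2 r hr]

theorem stmt1 (n : ℕ) (hn : 2 ≤ n) (i : Fin 3) (k : Fin (n+2)) :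
    ∃ v : Fin 4 → Coef n, fmap n v = Pi.single i (Pi.single k (1:ℂ)) := by
  rw [single_eq_e]
  fin_cases i
  · -- i = 0 : row0 = mulY v2 + mulX v3
    rcases Nat.eq_zero_or_pos (k:ℕ) with hk | hk
    · refine ⟨![e n 2, -e n 1, e n 0, 0], eq_single3 _ _ _ ?_ ?_⟩
      · show mulY n (e n 0) + mulX n (0:Coef n) = _
        rw [mulX_zero, mulY_e n 0 (by omega), hk, add_zero]
      · intro r hr
        fin_cases r
        · simp at hr
        · show (2:ℂ) • mulY n (-e n 1) + (2:ℂ) • mulX n (e n 0) = 0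
          rw [show (-e n 1 : Coef n) = (-1:ℂ) • e n 1 by simp, mulY_smul,
            mulY_e n 1 (by omega), mulX_e, smul_smul]
          ring_nf
          simp
        · show mulY n (e n 2) + mulX n (-e n 1) = 0
          rw [show (-e n 1 : Coef n) = (-1:ℂ) • e n 1 by simp, mulX_smul,
            mulY_e n 2 (by omega), mulX_e]
          simp
    · refine ⟨![0, 0, 0, e n ((k:ℕ)-1)], eq_single3 _ _ _ ?_ ?_⟩
      · show mulY n (0:Coef n) + mulX n (e n ((k:ℕ)-1)) = _
        rw [mulY_zero, mulX_e, zero_add, show (k:ℕ)-1+1 = (k:ℕ) by omega]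
      · intro r hr
        fin_cases r
        · simp at hr
        · show (2:ℂ) • mulY n (0:Coef n) + (2:ℂ) • mulX n (0:Coef n) = 0
          rw [mulY_zero, mulX_zero]; simp
        · show mulY n (0:Coef n) + mulX n (0:Coef n) = 0
          rw [mulY_zero, mulX_zero]; simp
  · -- i = 1 : row1 = 2 mulY v1 + 2 mulX v2
    rcases le_or_gt (k:ℕ) (n-1) with hk | hk
    · refine ⟨![(-(1/2):ℂ) • e n ((k:ℕ)+1), ((1/2):ℂ) • e n (k:ℕ), 0, 0],
        eq_single3 _ _ _ ?_ ?_⟩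
      · show (2:ℂ) • mulY n (((1/2):ℂ) • e n (k:ℕ)) + (2:ℂ) • mulX n (0:Coef n) = _
        rw [mulX_zero, mulY_smul, mulY_e n (k:ℕ) (by omega), smul_smul]
        norm_num
      · intro r hr
        fin_cases r
        · show mulY n (0:Coef n) + mulX n (0:Coef n) = 0
          rw [mulY_zero, mulX_zero]; simp
        · simp at hr
        · show mulY n ((-(1/2):ℂ) • e n ((k:ℕ)+1)) + mulX n (((1/2):ℂ) • e n (k:ℕ)) = 0
          rw [mulY_smul, mulX_smul, mulY_e n ((k:ℕ)+1) (by omega), mulX_e]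
          simp
    · refine ⟨![0, 0, ((1/2):ℂ) • e n ((k:ℕ)-1), (-(1/2):ℂ) • e n ((k:ℕ)-2)],
        eq_single3 _ _ _ ?_ ?_⟩
      · show (2:ℂ) • mulY n (0:Coef n) + (2:ℂ) • mulX n (((1/2):ℂ) • e n ((k:ℕ)-1)) = _
        rw [mulY_zero, mulX_smul, mulX_e, smul_smul, show (k:ℕ)-1+1 = (k:ℕ) by omega]
        norm_num
      · intro r hr
        fin_cases r
        · show mulY n (((1/2):ℂ) • e n ((k:ℕ)-1)) + mulX n ((-(1/2):ℂ) • e n ((k:ℕ)-2)) = 0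
          have hkle : (k:ℕ) ≤ n + 1 := by omega
          rw [mulY_smul, mulX_smul, mulY_e n ((k:ℕ)-1) (by omega), mulX_e,
            show (k:ℕ)-2+1 = (k:ℕ)-1 by omega]
          simp
        · simp at hr
        · show mulY n (0:Coef n) + mulX n (0:Coef n) = 0
          rw [mulY_zero, mulX_zero]; simp
  · -- i = 2 : row2 = mulY v0 + mulX v1
    rcases le_or_gt (k:ℕ) n with hk | hk
    · refine ⟨![e n (k:ℕ), 0, 0, 0], eq_single3 _ _ _ ?_ ?_⟩
      · show mulY n (e n (k:ℕ)) + mulX n (0:Coef n) = _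
        rw [mulX_zero, mulY_e n (k:ℕ) hk, add_zero]
      · intro r hr
        fin_cases r
        · show mulY n (0:Coef n) + mulX n (0:Coef n) = 0
          rw [mulY_zero, mulX_zero]; simp
        · show (2:ℂ) • mulY n (0:Coef n) + (2:ℂ) • mulX n (0:Coef n) = 0
          rw [mulY_zero, mulX_zero]; simp
        · simp at hr
    · have hk' : (k:ℕ) = n + 1 := by omega
      refine ⟨![0, e n n, -e n (n-1), e n (n-2)], eq_single3 _ _ _ ?_ ?_⟩
      · show mulY n (0:Coef n) + mulX n (e n n) = _
        rw [mulY_zero, mulX_e, zero_add, hk']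
      · intro r hr
        fin_cases r
        · show mulY n (-e n (n-1)) + mulX n (e n (n-2)) = 0
          rw [show (-e n (n-1) : Coef n) = (-1:ℂ) • e n (n-1) by simp, mulY_smul,
            mulY_e n (n-1) (by omega), mulX_e, show n-2+1 = n-1 by omega]
          simp
        · show (2:ℂ) • mulY n (e n n) + (2:ℂ) • mulX n (-e n (n-1)) = 0
          rw [show (-e n (n-1) : Coef n) = (-1:ℂ) • e n (n-1) by simp, mulX_smul,
            mulY_e n n le_rfl, mulX_e, show n-1+1 = n by omega, smul_smul]
          ring_nf
          simp
        · simp at hr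
end
end

section
/- Fix an integer d ≥ 0. An irreducible representation of Sp(2) with highest weight (a,b) (a ≥ b ≥ 0 integers) contains the Sp(1)×Sp(1)-representation (d)⊗(0) upon restriction if and only if (a,b) = (d+k, k) for some integer k ≥ 0, and in that case the multiplicity is exactly 1. -/
/-
STATEMENT 6: Fix an integer d ≥ 0.  An irreducible representation of Sp(2)
with highest weight (a,b) (a ≥ b ≥ 0) contains the Sp(1)×Sp(1)-representation
(d)⊗(0) upon restriction if and only if (a,b) = (d+k,k) for some k ≥ 0, and in
that case the multiplicity is exactly 1.
Formalization: the restriction to Sp(1)×Sp(1) is encoded by its multiplicity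
function M (M y c = multiplicity of (y)⊗(c)), characterized by the character
identity on the common maximal torus, with the Sp(2)-character given by the
Weyl character formula for C₂ in cross-multiplied (denominator-free) form.
The conclusion is that M d 0 ≠ 0 iff (a,b) = (d+k,k) for some k, and then
M d 0 = 1.
-/

noncomputable section

/-- The character of the irreducible SU(2)-module (m): Σ t^{m−2i}. -/
def sc (m : ℕ) (t : ℂˣ) : ℂ :=
  ∑ i ∈ Finset.range (m+1), ((t ^ ((m:ℤ) - 2*i) : ℂˣ) : ℂ)

/-- t^μ − t^{−μ}. -/
def Aexp (t : ℂˣ) (μ : ℤ) : ℂ := ((t ^ μ : ℂˣ) : ℂ) - ((t ^ (-μ) : ℂˣ) : ℂ)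

/-- The Weyl character formula numerator for the Sp(2)-representation of
highest weight (a,b): λ+ρ = (a+2, b+1). -/
def NumC2 (x1 x2 : ℕ) (t1 t2 : ℂˣ) : ℂ :=
  Aexp t1 ((x1:ℤ)+2) * Aexp t2 ((x2:ℤ)+1) - Aexp t1 ((x2:ℤ)+1) * Aexp t2 ((x1:ℤ)+2)


/-!
Write the restricted character as `∑_c γ_c(t₁) sc_c(t₂)`. Multiplying by `t₂ - t₂⁻¹` turns
`sc_c(t₂)` into `t₂^(c+1) - t₂^-(c+1)`, and the Weyl numerator for `(0,0)` is the Weyl denominator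
`(t₁ - t₁⁻¹)(t₂ - t₂⁻¹)(t₁ + t₁⁻¹ - t₂ - t₂⁻¹)`. Hence, for fixed `t₁`, the polynomial
`R(y) = (t₁ - t₁⁻¹)((t₁ + t₁⁻¹) y - y² - 1) ∑_c γ_c y^c - N⁺(y)`, with `N⁺` the half of the
numerator with positive powers of `y`, satisfies `R(y) = R(y⁻¹)` and is therefore constant.
At `y = t₁` the quadratic factor vanishes, while `R(0)` only sees `γ_0`; comparing the two gives
`(t₁ - t₁⁻¹) γ_0(t₁) = t₁^(a-b+1) - t₁^-(a-b+1)`, i.e. `γ_0 = sc_(a-b)`, and the same symmetry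
argument separates the coefficients of `γ_0 = ∑_y M(y,0) sc_y`.
-/

open Polynomial Finset

theorem Polynomial.eq_C_of_eval_inv_eq {K : Type*} [Field K] [Infinite K] (p : K[X])
    (h : ∀ x ≠ 0, p.eval x⁻¹ = p.eval x) : p = C (p.coeff 0) := by
  have heval : ∀ x ≠ 0, (reverse p).eval x = (X ^ p.natDegree * p).eval x := by
    intro x hx
    have : Invertible x⁻¹ := invertibleOfNonzero (inv_ne_zero hx)
    have hrev := eval₂_reverse_mul_pow (RingHom.id K) x⁻¹ p
    rw [invOf_eq_inv, inv_inv, eval₂_id, eval₂_id, h x hx] at hrev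
    rw [eval_mul, eval_pow, eval_X, ← hrev, mul_left_comm, ← mul_pow, mul_inv_cancel₀ hx,
      one_pow, mul_one]
  have hrev : reverse p = X ^ p.natDegree * p :=
    eq_of_infinite_eval_eq _ _ <| Set.infinite_of_finite_compl <|
      (Set.finite_singleton 0).subset fun x hx => by_contra fun hx0 => hx (heval x hx0)
  have hdeg : p.natDegree = 0 := by
    by_contra hne
    have hp : p ≠ 0 := fun h0 => hne (by simp [h0])
    have := reverse_natDegree_le p
    rw [hrev, natDegree_mul (pow_ne_zero _ X_ne_zero) hp, natDegree_X_pow] at this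
    omega
  exact eq_C_of_natDegree_eq_zero hdeg

theorem Polynomial.eq_of_eval_sub_eval_inv_eq {K : Type*} [Field K] [Infinite K] (p q : K[X])
    (h0 : p.coeff 0 = q.coeff 0)
    (h : ∀ x ≠ 0, p.eval x - p.eval x⁻¹ = q.eval x - q.eval x⁻¹) : p = q := by
  have hpq := (p - q).eq_C_of_eval_inv_eq fun x hx => by
    simp only [eval_sub]
    linear_combination -h x hx
  rwa [coeff_sub, h0, sub_self, C_0, sub_eq_zero] at hpq

lemma eq_ite_of_sum_C_mul_X_pow_succ_eq (m : ℕ → ℕ) (Y k : ℕ) (hm : ∀ y, m y ≠ 0 → y ≤ Y)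
    (h : ∑ y ∈ range (Y + 1), C (m y : ℂ) * X ^ (y + 1) = X ^ (k + 1)) (y : ℕ) :
    m y = if y = k then 1 else 0 := by
  have hcoeff := congrArg (coeff · (y + 1)) h
  simp only [finsetSum_coeff, coeff_C_mul_X_pow, coeff_X_pow, add_left_inj, sum_ite_eq,
    mem_range, Nat.lt_succ_iff] at hcoeff
  by_cases hy : y ≤ Y
  · rw [if_pos hy] at hcoeff
    split_ifs at hcoeff ⊢ <;> exact_mod_cast hcoeff
  · rw [if_neg hy, eq_comm, ite_eq_right_iff] at hcoeff
    rw [if_neg fun hyk => one_ne_zero (hcoeff hyk)]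
    exact not_not.mp fun hne => hy (hm y hne)

lemma Aexp_natCast (t : ℂˣ) (n : ℕ) : Aexp t n = (t : ℂ) ^ n - (t : ℂ)⁻¹ ^ n := by
  simp [Aexp, inv_pow]

lemma NumC2_eq (x1 x2 : ℕ) (t1 t2 : ℂˣ) : NumC2 x1 x2 t1 t2 =
    Aexp t1 ↑(x1 + 2) * Aexp t2 ↑(x2 + 1) - Aexp t1 ↑(x2 + 1) * Aexp t2 ↑(x1 + 2) := by
  simp [NumC2]

lemma NumC2_zero_zero (t1 t2 : ℂˣ) : NumC2 0 0 t1 t2 =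
    ((t1 : ℂ) - (t1 : ℂ)⁻¹) * ((t2 : ℂ) - (t2 : ℂ)⁻¹)
      * ((t1 : ℂ) + (t1 : ℂ)⁻¹ - ((t2 : ℂ) + (t2 : ℂ)⁻¹)) := by
  simp only [NumC2_eq, Aexp_natCast]
  ring

lemma sc_eq_pow_mul_geom_sum (c : ℕ) (t : ℂˣ) :
    sc c t = (t : ℂ) ^ c * ∑ i ∈ range (c + 1), ((t : ℂ)⁻¹ ^ 2) ^ i := by
  rw [sc, mul_sum]
  refine sum_congr rfl fun i _ => ?_
  rw [Units.val_zpow_eq_zpow_val, zpow_sub₀ t.ne_zero, ← pow_mul, inv_pow]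
  norm_cast

lemma sc_mul_sub_inv (c : ℕ) (t : ℂˣ) :
    sc c t * ((t : ℂ) - (t : ℂ)⁻¹) = (t : ℂ) ^ (c + 1) - (t : ℂ)⁻¹ ^ (c + 1) := by
  have ht : (t : ℂ) ≠ 0 := t.ne_zero
  have hinv : (t : ℂ) ^ (c + 1) * (t : ℂ)⁻¹ ^ (c + 1) = 1 := by
    rw [← mul_pow, mul_inv_cancel₀ ht, one_pow]
  rw [sc_eq_pow_mul_geom_sum]
  calc (t : ℂ) ^ c * (∑ i ∈ range (c + 1), ((t : ℂ)⁻¹ ^ 2) ^ i) * ((t : ℂ) - (t : ℂ)⁻¹)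
      = -(t : ℂ) ^ (c + 1)
          * ((∑ i ∈ range (c + 1), ((t : ℂ)⁻¹ ^ 2) ^ i) * ((t : ℂ)⁻¹ ^ 2 - 1)) := by
        field_simp
        ring
    _ = _ := by
        rw [geom_sum_mul, ← pow_mul, mul_comm 2, pow_mul]
        linear_combination (-(t : ℂ)⁻¹ ^ (c + 1)) * hinv

lemma sub_inv_mul_sum_sc (s : Finset ℕ) (f : ℕ → ℂ) (t : ℂˣ) :
    ((t : ℂ) - (t : ℂ)⁻¹) * ∑ c ∈ s, f c * sc c t
      = ∑ c ∈ s, f c * ((t : ℂ) ^ (c + 1) - (t : ℂ)⁻¹ ^ (c + 1)) := by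
  rw [mul_sum]
  refine sum_congr rfl fun c _ => ?_
  rw [← sc_mul_sub_inv]
  ring

lemma finsum_mul_sc_eq_sum (M : ℕ → ℕ → ℕ) (Y N : ℕ)
    (hM : ∀ y c, M y c ≠ 0 → y ≤ Y ∧ c ≤ N) (t1 t2 : ℂˣ) :
    ∑ᶠ p : ℕ × ℕ, (M p.1 p.2 : ℂ) * sc p.1 t1 * sc p.2 t2
      = ∑ c ∈ range (N + 1), (∑ y ∈ range (Y + 1), (M y c : ℂ) * sc y t1) * sc c t2 := by
  rw [finsum_eq_sum_of_support_subset _ (s := range (Y + 1) ×ˢ range (N + 1)), sum_product_right]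
  · simp_rw [sum_mul]
  · intro p hp
    have hMp : M p.1 p.2 ≠ 0 := fun h0 => hp (by simp [h0])
    simpa [Nat.lt_succ_iff] using hM p.1 p.2 hMp

lemma sub_inv_mul_eq_of_NumC2_eq (b k N : ℕ) (g : ℕ → ℂ) (t1 : ℂˣ)
    (h : ∀ t2 : ℂˣ, NumC2 (b + k) b t1 t2 =
      NumC2 0 0 t1 t2 * ∑ c ∈ range (N + 1), g c * sc c t2) :
    ((t1 : ℂ) - (t1 : ℂ)⁻¹) * g 0 = (t1 : ℂ) ^ (k + 1) - (t1 : ℂ)⁻¹ ^ (k + 1) := by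
  have hchar : ∀ y ≠ 0,
      ((t1 : ℂ) ^ (b + k + 2) - (t1 : ℂ)⁻¹ ^ (b + k + 2)) * (y ^ (b + 1) - y⁻¹ ^ (b + 1))
        - ((t1 : ℂ) ^ (b + 1) - (t1 : ℂ)⁻¹ ^ (b + 1)) * (y ^ (b + k + 2) - y⁻¹ ^ (b + k + 2))
      = ((t1 : ℂ) - (t1 : ℂ)⁻¹) * ((t1 : ℂ) + (t1 : ℂ)⁻¹ - (y + y⁻¹))
        * ∑ c ∈ range (N + 1), g c * (y ^ (c + 1) - y⁻¹ ^ (c + 1)) := by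
    intro y hy
    have hsum := sub_inv_mul_sum_sc (range (N + 1)) g (Units.mk0 y hy)
    have hy2 := h (Units.mk0 y hy)
    rw [NumC2_eq, NumC2_zero_zero] at hy2
    simp only [Aexp_natCast, Units.val_mk0] at hy2 hsum
    rw [hy2, ← hsum]
    ring
  set x : ℂ := (t1 : ℂ)
  have hx : x * x⁻¹ = 1 := mul_inv_cancel₀ t1.ne_zero
  set G : ℂ[X] := ∑ c ∈ range (N + 1), C (g c) * X ^ c with hG
  set R : ℂ[X] := C (x - x⁻¹) * (C (x + x⁻¹) * X - X ^ 2 - 1) * G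
      - (C (x ^ (b + k + 2) - x⁻¹ ^ (b + k + 2)) * X ^ (b + 1)
        - C (x ^ (b + 1) - x⁻¹ ^ (b + 1)) * X ^ (b + k + 2)) with hR
  have hGeval : ∀ y : ℂ, y * G.eval y - y⁻¹ * G.eval y⁻¹
      = ∑ c ∈ range (N + 1), g c * (y ^ (c + 1) - y⁻¹ ^ (c + 1)) := by
    intro y
    simp only [hG, eval_finsetSum, eval_mul, eval_C, eval_pow, eval_X, mul_sum,
      ← sum_sub_distrib]
    exact sum_congr rfl fun c _ => by ring
  have hRinv : ∀ y ≠ 0, R.eval y⁻¹ = R.eval y := by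
    intro y hy
    have hyy : y * y⁻¹ = 1 := mul_inv_cancel₀ hy
    simp only [hR, eval_sub, eval_mul, eval_C, eval_X, eval_pow, eval_one]
    linear_combination hchar y hy - (x - x⁻¹) * (x + x⁻¹ - (y + y⁻¹)) * hGeval y
      + (x - x⁻¹) * (G.eval y⁻¹ - G.eval y) * hyy
  have hG0 : G.eval 0 = g 0 := by simp [hG, eval_finsetSum, sum_range_succ']
  have hux : (x + x⁻¹) * x - x ^ 2 - 1 = 0 := by linear_combination hx
  have hNx : (x ^ (b + k + 2) - x⁻¹ ^ (b + k + 2)) * x ^ (b + 1)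
      - (x ^ (b + 1) - x⁻¹ ^ (b + 1)) * x ^ (b + k + 2) = x ^ (k + 1) - x⁻¹ ^ (k + 1) := by
    have hpow : x ^ (b + 1) * x⁻¹ ^ (b + 1) = 1 := by rw [← mul_pow, hx, one_pow]
    rw [show b + k + 2 = (b + 1) + (k + 1) by ring, pow_add, pow_add]
    linear_combination (x ^ (k + 1) - x⁻¹ ^ (k + 1)) * hpow
  have hR0 := congrArg (eval x) (R.eq_C_of_eval_inv_eq hRinv)
  rw [eval_C, coeff_zero_eq_eval_zero] at hR0
  simp only [hR, eval_sub, eval_mul, eval_C, eval_X, eval_pow, eval_one, hG0, hux, hNx] at hR0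
  norm_num at hR0
  linear_combination hR0

theorem stmt6 (a b d : ℕ) (hba : b ≤ a) (M : ℕ → ℕ → ℕ)
    (hfin : (Function.support fun p : ℕ × ℕ => M p.1 p.2).Finite)
    (hM : ∀ t1 t2 : ℂˣ, NumC2 a b t1 t2 =
      NumC2 0 0 t1 t2 * ∑ᶠ p : ℕ × ℕ, (M p.1 p.2 : ℂ) * sc p.1 t1 * sc p.2 t2) :
    (M d 0 ≠ 0 ↔ ∃ k : ℕ, a = d + k ∧ b = k) ∧
    ((∃ k : ℕ, a = d + k ∧ b = k) → M d 0 = 1) := by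
  obtain ⟨k, rfl⟩ := Nat.exists_eq_add_of_le hba
  obtain ⟨⟨Y, N⟩, hYN⟩ := hfin.bddAbove
  have hbound : ∀ y c, M y c ≠ 0 → y ≤ Y ∧ c ≤ N := fun y c h => Prod.mk_le_mk.mp (hYN h)
  have hcol : ∑ y ∈ range (Y + 1), C (M y 0 : ℂ) * X ^ (y + 1) = X ^ (k + 1) := by
    refine eq_of_eval_sub_eval_inv_eq _ _ (by simp) fun x hx => ?_
    have h0 := sub_inv_mul_eq_of_NumC2_eq b k N _ (Units.mk0 x hx)
      fun t2 => by rw [hM, finsum_mul_sc_eq_sum M Y N hbound]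
    rw [sub_inv_mul_sum_sc] at h0
    simpa [eval_finsetSum, ← sum_sub_distrib, mul_sub] using h0
  have hM0 := eq_ite_of_sum_C_mul_X_pow_succ_eq (M · 0) Y k (fun y hy => (hbound y 0 hy).1) hcol
  have hweight : (∃ j : ℕ, b + k = d + j ∧ b = j) ↔ d = k :=
    ⟨fun ⟨_, hbk, hb⟩ => by omega, fun hdk => ⟨b, by omega, rfl⟩⟩
  rw [hweight, hM0]
  split_ifs <;> simp_all
end
end

section
/- Let λ = (x₁,…,xₙ) be a dominant weight for Sp(n) (a descending sequence of non-negative integers) and μ = (y₁,…,y_{n−1}) a dominant weight for Sp(n−1) that 2-step interlaces λ, i.e. x_i ≥ y_i ≥ x_{i+2} for all i (with x_{n+1} = 0). Let z₁ ≥ z₂ ≥ … ≥ z_{2n−1} be the joint decreasing rearrangement of the x_i and y_j. Then as an Sp(1) = SU(2)-module, Hom_{Sp(n−1)}((μ),(λ)) ≅ (z₁−z₂) ⊗ (z₃−z₄) ⊗ ⋯ ⊗ (z_{2n−1}). -/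
/-
STATEMENT 7 (Wallach–Yacobi branching rule from Sp(n) to Sp(n−1)×Sp(1),
formalized in the case n = 2, as sanctioned by the context): for a dominant
weight λ = (x₁,x₂) of Sp(2) (x₁ ≥ x₂ ≥ 0) and a dominant weight μ = (y) of
Sp(1), μ 2-step interlaces λ iff x₁ ≥ y ≥ x₃ = 0; letting z₁ ≥ z₂ ≥ z₃ be
the decreasing rearrangement of x₁, x₂, y, one has, as Sp(1)-modules,
Hom_{Sp(1)}((μ),(λ)) ≅ (z₁−z₂) ⊗ (z₃).
Equivalently (and this is the formalization below): the character identity on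
the common maximal torus (t₁,t₂),
  χ^{Sp(2)}_{(x₁,x₂)}(t₁,t₂) = Σ_{y=0}^{x₁} χ_y(t₁) · χ_{z₁−z₂}(t₂) · χ_{z₃}(t₂),
written with the Weyl character formula for C₂ in cross-multiplied
(denominator-free) form.  Since y ≤ x₁ and x₂ ≤ x₁, the sorted values are
z₁ = max x₁ y, z₂ = max x₂ (min x₁ y), z₃ = min x₂ y.
-/

noncomputable section

lemma uval (t : ℂˣ) (μ : ℤ) : ((t ^ μ : ℂˣ) : ℂ) = (t:ℂ) ^ μ :=
  Units.val_zpow_eq_zpow_val t μ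

lemma aexp_eq (t : ℂˣ) (μ : ℤ) : Aexp t μ = (t:ℂ) ^ μ - (t:ℂ) ^ (-μ) := by
  rw [Aexp, uval, uval]

lemma aexp_zero (t : ℂˣ) : Aexp t 0 = 0 := by simp [Aexp]

lemma sc_zero (t : ℂˣ) : sc 0 t = 1 := by simp [sc]

lemma sc_one (t : ℂˣ) : sc 1 t = (t:ℂ)^(1:ℤ) + (t:ℂ)^(-1:ℤ) := by
  simp [sc, Finset.sum_range_succ, uval]

lemma lem1 (t : ℂˣ) (μ : ℤ) :
    sc 1 t * Aexp t μ = Aexp t (μ+1) + Aexp t (μ-1) := by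
  have hs : (t:ℂ) ≠ 0 := t.ne_zero
  rw [sc_one, aexp_eq, aexp_eq, aexp_eq,
    show -(μ+1) = -μ + -1 by ring, show μ-1 = μ + -1 by ring,
    show -(μ + -1) = -μ + 1 by ring,
    zpow_add₀ hs, zpow_add₀ hs, zpow_add₀ hs, zpow_add₀ hs]
  ring

lemma lem2 (t : ℂˣ) (m : ℕ) : Aexp t 1 * sc m t = Aexp t ((m:ℤ)+1) := by
  have hs : (t:ℂ) ≠ 0 := t.ne_zero
  have tele := Finset.sum_range_sub' (f := fun i : ℕ => (t:ℂ)^((m:ℤ)+1-2*i)) (n := m+1)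
  have key : Aexp t 1 * sc m t
      = ∑ i ∈ Finset.range (m+1),
        ((t:ℂ)^((m:ℤ)+1-2*(i:ℤ)) - (t:ℂ)^((m:ℤ)+1-2*(((i+1:ℕ)):ℤ))) := by
    rw [sc, Finset.mul_sum]
    refine Finset.sum_congr rfl fun i _ => ?_
    rw [aexp_eq, uval, sub_mul, ← zpow_add₀ hs, ← zpow_add₀ hs]
    congr 2 <;> push_cast <;> ring
  rw [key, tele, aexp_eq]
  congr 2 <;> push_cast <;> ring

lemma lem3 (t : ℂˣ) (m : ℕ) : sc 1 t * sc (m+1) t = sc (m+2) t + sc m t := by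
  have hs : (t:ℂ) ≠ 0 := t.ne_zero
  have key : sc 1 t * sc (m+1) t
      = ∑ i ∈ Finset.range (m+2), ((t:ℂ)^(((m:ℤ)+2)-2*i) + (t:ℂ)^((m:ℤ)-2*i)) := by
    rw [sc_one, sc, Finset.mul_sum]
    refine Finset.sum_congr rfl fun i _ => ?_
    rw [uval, add_mul, ← zpow_add₀ hs, ← zpow_add₀ hs]
    congr 2 <;> push_cast <;> ring
  have h1 : sc (m+2) t
      = (∑ i ∈ Finset.range (m+2), (t:ℂ)^(((m:ℤ)+2)-2*i)) + (t:ℂ)^(-((m:ℤ)+2)) := by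
    rw [sc, Finset.sum_range_succ]
    congr 1
    · refine Finset.sum_congr rfl fun i _ => ?_
      rw [uval]; norm_cast
    · rw [uval]; congr 1; push_cast; ring
  have h2 : (∑ i ∈ Finset.range (m+2), (t:ℂ)^((m:ℤ)-2*i))
      = sc m t + (t:ℂ)^(-((m:ℤ)+2)) := by
    rw [Finset.sum_range_succ, sc]
    congr 1
    · exact Finset.sum_congr rfl fun i _ => (uval t _).symm
    · congr 1; push_cast; ring
  rw [key, Finset.sum_add_distrib, h2, h1]; ring

lemma lem4 (t : ℂˣ) (m : ℕ) :
    Aexp t 2 * sc m t = Aexp t ((m:ℤ)+2) + Aexp t m := by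
  have hA2 : Aexp t 2 = sc 1 t * Aexp t 1 := by
    rw [lem1]; norm_num [aexp_zero]
  rw [hA2, mul_assoc, lem2, lem1, show (m:ℤ)+1+1 = (m:ℤ)+2 by ring,
    show (m:ℤ)+1-1 = (m:ℤ) by ring]

lemma K00 (t1 t2 : ℂˣ) :
    NumC2 0 0 t1 t2 = Aexp t1 2 * Aexp t2 1 - Aexp t1 1 * Aexp t2 2 := by
  norm_num [NumC2]

lemma Kmul (t1 t2 : ℂˣ) (p q : ℕ) :
    NumC2 0 0 t1 t2 * (sc p t1 * sc q t2) =
      (Aexp t1 ((p:ℤ)+2) + Aexp t1 p) * Aexp t2 ((q:ℤ)+1)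
        - Aexp t1 ((p:ℤ)+1) * (Aexp t2 ((q:ℤ)+2) + Aexp t2 q) := by
  rw [K00]
  linear_combination (Aexp t2 1 * sc q t2) * lem4 t1 p
    + (Aexp t1 ((p:ℤ)+2) + Aexp t1 p) * lem2 t2 q
    - (Aexp t2 2 * sc q t2) * lem2 t1 p
    - Aexp t1 ((p:ℤ)+1) * lem4 t2 q

lemma diag (t1 t2 : ℂˣ) (m : ℕ) :
    NumC2 m m t1 t2 = NumC2 0 0 t1 t2 * ∑ y ∈ Finset.range (m+1), sc y t1 * sc y t2 := by
  induction m with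
  | zero => simp [Finset.sum_range_one, sc_zero]
  | succ m ih =>
    rw [Finset.sum_range_succ, mul_add, ← ih]
    linear_combination (norm := (simp only [NumC2]; push_cast; ring_nf)) (-1 : ℂ) * Kmul t1 t2 (m+1) (m+1)

lemma offdiag (t1 t2 : ℂˣ) (m : ℕ) :
    NumC2 (m+1) m t1 t2 = NumC2 0 0 t1 t2 *
      ((∑ y ∈ Finset.range (m+1), sc y t1 * (sc 1 t2 * sc y t2)) + sc (m+1) t1 * sc m t2) := by
  induction m with
  | zero =>
    have e1 := Kmul t1 t2 0 1
    have e2 := Kmul t1 t2 1 0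
    norm_num [aexp_zero, sc_zero] at e1 e2
    simp only [zero_add, Finset.sum_range_one, sc_zero, one_mul, mul_one]
    linear_combination (norm := (simp only [NumC2]; push_cast; ring_nf)) (-1 : ℂ) * e1 + (-1 : ℂ) * e2
  | succ m ih =>
    rw [Finset.sum_range_succ, lem3 t2 m]
    set S := ∑ y ∈ Finset.range (m+1), sc y t1 * (sc 1 t2 * sc y t2) with hSdef
    linear_combination (norm := (simp only [NumC2]; push_cast; ring_nf))
      ih + (-1 : ℂ) * Kmul t1 t2 (m+1) (m+2) + (-1 : ℂ) * Kmul t1 t2 (m+2) (m+1)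

lemma main_aux (t1 t2 : ℂˣ) (x2 k : ℕ) :
    NumC2 (x2+k) x2 t1 t2 = NumC2 0 0 t1 t2 *
      ∑ y ∈ Finset.range (x2+k+1),
        sc y t1 * (sc (x2+k - max x2 y) t2 * sc (min x2 y) t2) := by
  induction k using Nat.twoStepInduction with
  | zero =>
    rw [Finset.sum_congr rfl (fun y hy => ?_)]
    · exact diag t1 t2 x2
    · have hy' : y ≤ x2 := by have := Finset.mem_range.mp hy; omega
      rw [max_eq_left hy', min_eq_right hy', Nat.add_zero, Nat.sub_self, sc_zero, one_mul]
  | one =>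
    rw [Finset.sum_range_succ,
      Finset.sum_congr rfl (fun y hy => ?_), max_eq_right (Nat.le_succ x2),
      min_eq_left (Nat.le_succ x2), Nat.sub_self, sc_zero, one_mul]
    · exact offdiag t1 t2 x2
    · have hy' : y ≤ x2 := by have := Finset.mem_range.mp hy; omega
      rw [max_eq_left hy', min_eq_right hy',
        show x2 + 1 - x2 = 1 by omega]
  | more k ih1 ih2 =>
    simp only [← Nat.add_assoc] at ih1 ih2 ⊢
    rw [Finset.sum_range_succ] at ih2
    rw [show x2+k+1 - max x2 (x2+k+1) = 0 by omega, sc_zero, one_mul,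
      show min x2 (x2+k+1) = x2 by omega] at ih2
    have hmid : ∑ y ∈ Finset.range (x2+k+1),
          sc y t1 * (sc (x2+k+1+1 - max x2 y) t2 * sc (min x2 y) t2)
        = ∑ y ∈ Finset.range (x2+k+1),
            (sc 1 t2 * (sc y t1 * (sc (x2+k+1 - max x2 y) t2 * sc (min x2 y) t2))
              - sc y t1 * (sc (x2+k - max x2 y) t2 * sc (min x2 y) t2)) := by
      refine Finset.sum_congr rfl fun y hy => ?_
      have hy' : y ≤ x2 + k := by have := Finset.mem_range.mp hy; omega
      rw [show x2+k+1+1 - max x2 y = (x2+k - max x2 y) + 2 by omega,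
        show x2+k+1 - max x2 y = (x2+k - max x2 y) + 1 by omega]
      linear_combination (-1 : ℂ) * (sc y t1 * sc (min x2 y) t2) * lem3 t2 (x2+k - max x2 y)
    rw [show x2+k+2 = x2+k+1+1 by omega, Finset.sum_range_succ, Finset.sum_range_succ,
      hmid, Finset.sum_sub_distrib, ← Finset.mul_sum,
      show x2+k+1+1 - max x2 (x2+k+1+1) = 0 by omega, sc_zero, one_mul,
      show min x2 (x2+k+1+1) = x2 by omega,
      show x2+k+1+1 - max x2 (x2+k+1) = 1 by omega,
      show min x2 (x2+k+1) = x2 by omega]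
    set S1 := ∑ y ∈ Finset.range (x2+k+1),
        sc y t1 * (sc (x2+k - max x2 y) t2 * sc (min x2 y) t2) with hS1def
    set S2 := ∑ y ∈ Finset.range (x2+k+1),
        sc y t1 * (sc (x2+k+1 - max x2 y) t2 * sc (min x2 y) t2) with hS2def
    linear_combination (norm := (simp only [NumC2]; push_cast; ring_nf))
      sc 1 t2 * ih2 + (-1 : ℂ) * ih1 + (-1 : ℂ) * Kmul t1 t2 (x2+k+1+1) x2
      + (-1 : ℂ) * Aexp t1 ((x2:ℤ)+(k:ℤ)+3) * lem1 t2 ((x2:ℤ)+1)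
      + Aexp t1 ((x2:ℤ)+1) * lem1 t2 ((x2:ℤ)+(k:ℤ)+3)

theorem stmt7 (x1 x2 : ℕ) (h : x2 ≤ x1) (t1 t2 : ℂˣ) :
    NumC2 x1 x2 t1 t2 =
      NumC2 0 0 t1 t2 *
        ∑ y ∈ Finset.range (x1+1),
          sc y t1 * (sc (max x1 y - max x2 (min x1 y)) t2 * sc (min x2 y) t2) := by
  obtain ⟨k, rfl⟩ := Nat.exists_eq_add_of_le h
  rw [Finset.sum_congr rfl (fun y hy => ?_)]
  · exact main_aux t1 t2 x2 k
  · have hy' : y ≤ x2 + k := by have := Finset.mem_range.mp hy; omega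
    rw [max_eq_left hy', min_eq_right hy']
end
end
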